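/- Let T be a theory over a one-sorted first-order signature. If T is stably finite and finitely smooth, then T has a strong pre-witness. -/

import Mathlib

open FirstOrder FirstOrder.Language

universe u v

/-- `M` (with structure `inst`) is a model of the theory `T`. -/
def ModelsT (L : FirstOrder.Language.{u, v}) (T : L.Theory) (M : Type) (inst : L.Structure M) : Prop :=
  letI := inst
  T.Model M

/-- Realization of a formula, with the structure instance given explicitly. -/
def RealizeIn (L : FirstOrder.Language.{u, v}) (M : Type) (inst : L.Structure M) {α : Type}
    (φ : L.Formula α) (v : α → M) : Prop :=
  letI := inst
  φ.Realize v

/-- A valuation `v` satisfies the arrangement `δ_V^E` determined on the finite variable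
set `V` by the equivalence relation `E`. -/
def RealizesArr {M : Type} (E : Setoid ℕ) (V : Finset ℕ) (v : ℕ → M) : Prop :=
  ∀ x ∈ V, ∀ y ∈ V, (E.r x y ↔ v x = v y)

/-- `T` is stably finite: every quantifier-free formula satisfied in a model of `T` is
satisfied in a finite model of `T` of no greater cardinality. -/
def StablyFiniteT (L : FirstOrder.Language.{u, v}) (T : L.Theory) : Prop :=
  ∀ φ : L.Formula ℕ, φ.IsQF →
    ∀ (M : Type) (inst : L.Structure M), ModelsT L T M inst →
      ∀ v : ℕ → M, RealizeIn L M inst φ v →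
        ∃ (N : Type) (instN : L.Structure N), ModelsT L T N instN ∧ Finite N ∧
          Cardinal.mk N ≤ Cardinal.mk M ∧ ∃ w : ℕ → N, RealizeIn L N instN φ w

/-- `T` is finitely smooth: for every quantifier-free formula `φ`, model of `T` with a
valuation satisfying `φ`, and finite cardinal `κ` at least the size of the model, there
is a model of `T` of size exactly `κ` with a valuation satisfying `φ`. -/
def FinitelySmoothT (L : FirstOrder.Language.{u, v}) (T : L.Theory) : Prop :=
  ∀ φ : L.Formula ℕ, φ.IsQF →
    ∀ (M : Type) (inst : L.Structure M), ModelsT L T M inst →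
      ∀ v : ℕ → M, RealizeIn L M inst φ v →
        ∀ κ : ℕ, Cardinal.mk M ≤ (κ : Cardinal) →
          ∃ (N : Type) (instN : L.Structure N), ModelsT L T N instN ∧
            Cardinal.mk N = (κ : Cardinal) ∧ ∃ w : ℕ → N, RealizeIn L N instN φ w

/-- `T` is smooth: for every quantifier-free formula `φ`, model of `T` with a valuation
satisfying `φ`, and cardinal `κ` at least the size of the model, there is a model of `T`
of size exactly `κ` with a valuation satisfying `φ`. -/
def SmoothT (L : FirstOrder.Language.{u, v}) (T : L.Theory) : Prop :=
  ∀ φ : L.Formula ℕ, φ.IsQF →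
    ∀ (M : Type) (inst : L.Structure M), ModelsT L T M inst →
      ∀ v : ℕ → M, RealizeIn L M inst φ v →
        ∀ κ : Cardinal, Cardinal.mk M ≤ κ →
          ∃ (N : Type) (instN : L.Structure N), ModelsT L T N instN ∧
            Cardinal.mk N = κ ∧ ∃ w : ℕ → N, RealizeIn L N instN φ w

/-- `T` is stably infinite: every quantifier-free formula satisfiable in some model of `T`
is satisfiable in some model of `T` with infinite domain. -/
def StablyInfiniteT (L : FirstOrder.Language.{u, v}) (T : L.Theory) : Prop :=
  ∀ φ : L.Formula ℕ, φ.IsQF →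
    (∃ (M : Type) (inst : L.Structure M), ModelsT L T M inst ∧
      ∃ v : ℕ → M, RealizeIn L M inst φ v) →
    ∃ (M : Type) (inst : L.Structure M), ModelsT L T M inst ∧ Infinite M ∧
      ∃ v : ℕ → M, RealizeIn L M inst φ v

/-- `wit` is a pre-witness for `T`: it maps quantifier-free formulas to quantifier-free
formulas; `φ` and `∃x⃗. wit(φ)` (where `x⃗ = vars(wit(φ)) \ vars(φ)`) hold in exactly the
same models-with-valuations of `T`; and if `wit(φ)` is satisfiable in a model of `T`,
then `φ` is satisfied in some model of `T` under a valuation in which every element of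
the domain is the value of some variable of `wit(φ)`. -/
def IsPreWitness (L : FirstOrder.Language.{u, v}) (T : L.Theory) (wit : L.Formula ℕ → L.Formula ℕ) :
    Prop :=
  (∀ φ : L.Formula ℕ, φ.IsQF → (wit φ).IsQF) ∧
  (∀ φ : L.Formula ℕ, φ.IsQF →
    ∀ (M : Type) (inst : L.Structure M), ModelsT L T M inst → ∀ v : ℕ → M,
      (RealizeIn L M inst φ v ↔
        ∃ w : ℕ → M, (∀ x : ℕ, x ∉ (wit φ).freeVarFinset \ φ.freeVarFinset → w x = v x) ∧
          RealizeIn L M inst (wit φ) w)) ∧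
  (∀ φ : L.Formula ℕ, φ.IsQF →
    (∃ (M : Type) (inst : L.Structure M), ModelsT L T M inst ∧
      ∃ v : ℕ → M, RealizeIn L M inst (wit φ) v) →
    ∃ (M : Type) (inst : L.Structure M), ModelsT L T M inst ∧
      ∃ v : ℕ → M, RealizeIn L M inst φ v ∧
        ∀ a : M, ∃ x ∈ (wit φ).freeVarFinset, v x = a)

/-- `wit` is a strong pre-witness for `T`: a pre-witness such that in addition, for every
quantifier-free `φ`, finite variable set `V`, and arrangement `δ_V` of `V`, if
`wit(φ) ∧ δ_V` is satisfiable in a model of `T`, then it is satisfied in some model of `T`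
under a valuation in which every element of the domain is the value of some variable of
`wit(φ) ∧ δ_V`. -/
def IsStrongPreWitness (L : FirstOrder.Language.{u, v}) (T : L.Theory)
    (wit : L.Formula ℕ → L.Formula ℕ) : Prop :=
  IsPreWitness L T wit ∧
  ∀ φ : L.Formula ℕ, φ.IsQF → ∀ (V : Finset ℕ) (E : Setoid ℕ),
    (∃ (M : Type) (inst : L.Structure M), ModelsT L T M inst ∧
      ∃ v : ℕ → M, RealizeIn L M inst (wit φ) v ∧ RealizesArr E V v) →
    ∃ (M : Type) (inst : L.Structure M), ModelsT L T M inst ∧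
      ∃ v : ℕ → M, RealizeIn L M inst (wit φ) v ∧ RealizesArr E V v ∧
        ∀ a : M, ∃ x ∈ (wit φ).freeVarFinset ∪ V, v x = a

/-!
For a quantifier-free `φ` with free variables `S` and an equality pattern `R` on `S`, let `n_R` be
the least size of a model of `T` satisfying `φ` under the arrangement `R`. The witness `wit(φ)` is
`φ` together with, for every `R`, the requirement that if `S` is arranged by `R` then `n_R` fresh
variables take pairwise distinct values. Stable finiteness bounds `n_R` by the size of every model
satisfying `φ` under `R`, so the fresh variables can always be interpreted. Conversely, if a
valuation satisfies `wit(φ)` and an arrangement of `V`, then the variables of `wit(φ)` and `V`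
take at least `n_R` values; finite smoothness gives a model of `T` of exactly that size satisfying
`φ` under `R`, and these values can be mapped bijectively onto it, agreeing with that model on `S`.
-/

theorem exists_extend_of_mk_eq_card_image {α M N : Type*} [DecidableEq M] [Nonempty M]
    (v : α → M) (w₁ : α → N) {S W : Finset α} (hSW : S ⊆ W)
    (hker : ∀ x ∈ S, ∀ y ∈ S, (w₁ x = w₁ y ↔ v x = v y))
    (hcard : Cardinal.mk N = (W.image v).card) :
    ∃ w : α → N, (∀ x ∈ S, w x = w₁ x) ∧ (∀ x ∈ W, ∀ y ∈ W, (w x = w y ↔ v x = v y)) ∧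
      ∀ b, ∃ x ∈ W, w x = b := by
  classical
  obtain ⟨_, hcard⟩ := Cardinal.mk_eq_nat_iff_fintype.1 hcard
  have hfac : Function.FactorsThrough (fun x : S => v x) (fun x : S => w₁ x) :=
    fun x y h => (hker x x.2 y y.2).1 h
  set f := Function.extend (fun x : S => w₁ x) (fun x : S => v x) fun _ => Classical.arbitrary M
  have hf : ∀ x ∈ S, f (w₁ x) = v x := fun x hx => hfac.extend_apply _ ⟨x, hx⟩
  obtain ⟨g, hg⟩ := Set.MapsTo.exists_equiv_extend_of_card_eq (s := w₁ '' S) (f := f) hcard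
    (by rintro _ ⟨x, hx, rfl⟩; rw [hf x hx]; exact Finset.mem_image_of_mem v (hSW hx))
    (by rintro _ ⟨x, hx, rfl⟩ _ ⟨y, hy, rfl⟩ h; rw [hf x hx, hf y hy] at h
        exact (hker x hx y hy).2 h)
  refine ⟨fun x => if hx : x ∈ W then g.symm ⟨v x, Finset.mem_image_of_mem v hx⟩ else w₁ x,
    fun x hx => ?_, fun x hx y hy => ?_, fun b => ?_⟩
  · dsimp only
    rw [dif_pos (hSW hx), Equiv.symm_apply_eq, Subtype.ext_iff, hg _ ⟨x, hx, rfl⟩, hf x hx]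
  · simp only [dif_pos hx, dif_pos hy, g.symm.injective.eq_iff, Subtype.mk.injEq]
  · obtain ⟨x, hx, hxb⟩ := Finset.mem_image.1 (g b).2
    refine ⟨x, hx, ?_⟩
    simp only [dif_pos hx, hxb, Subtype.coe_eta, Equiv.symm_apply_apply]

theorem exists_update_injOn_of_card_le {α M : Type*} (v : α → M) (B : Finset α)
    (h : (B.card : Cardinal) ≤ Cardinal.mk M) :
    ∃ w : α → M, (∀ x ∉ B, w x = v x) ∧ Set.InjOn w B := by
  classical
  obtain ⟨e⟩ : Nonempty (B ↪ M) := by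
    rw [← Cardinal.lift_mk_le', Cardinal.mk_coe_finset]
    simpa using h
  refine ⟨fun x => if hx : x ∈ B then e ⟨x, hx⟩ else v x, fun x hx => dif_neg hx,
    fun x hx y hy hxy => ?_⟩
  simp only [dif_pos (Finset.mem_coe.1 hx), dif_pos (Finset.mem_coe.1 hy)] at hxy
  exact congrArg Subtype.val (e.injective hxy)

namespace FirstOrder.Language

variable {L : Language.{u, v}} {α : Type*} {M : Type*} [L.Structure M]

namespace BoundedFormula

variable {β : Type*} [Finite β] {n : ℕ}

theorem IsQF.iInf {f : β → L.BoundedFormula α n} (h : ∀ b, (f b).IsQF) : (iInf f).IsQF := by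
  suffices ∀ l : List (L.BoundedFormula α n), (∀ ψ ∈ l, ψ.IsQF) → (l.foldr (· ⊓ ·) ⊤).IsQF from
    this _ (by simpa using fun b => h b)
  intro l hl
  induction l with
  | nil => exact IsQF.top
  | cons ψ l ih => exact (hl ψ (by simp)).inf (ih fun χ hχ => hl χ (by simp [hχ]))

variable [DecidableEq α]

theorem freeVarFinset_inf (φ ψ : L.BoundedFormula α n) :
    (φ ⊓ ψ).freeVarFinset = φ.freeVarFinset ∪ ψ.freeVarFinset := by
  simp [Min.min, BoundedFormula.not, freeVarFinset]

theorem freeVarFinset_subset_iInf (f : β → L.BoundedFormula α n) (b : β) :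
    (f b).freeVarFinset ⊆ (iInf f).freeVarFinset := by
  suffices ∀ l : List (L.BoundedFormula α n), f b ∈ l →
      (f b).freeVarFinset ⊆ (l.foldr (· ⊓ ·) ⊤).freeVarFinset from
    this _ (by simp)
  intro l hl
  induction l with
  | nil => simp at hl
  | cons ψ l ih =>
    rw [List.foldr_cons, freeVarFinset_inf]
    rcases List.mem_cons.1 hl with rfl | hl
    · exact Finset.subset_union_left
    · exact (ih hl).trans Finset.subset_union_right

end BoundedFormula

namespace Formula

theorem realize_congr [DecidableEq α] {φ : L.Formula α} {v w : α → M}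
    (h : ∀ x ∈ φ.freeVarFinset, v x = w x) : φ.Realize v ↔ φ.Realize w :=
  (BoundedFormula.realize_restrictFreeVar (f := id) (v := fun x => v x) v fun _ => rfl).symm.trans
    (BoundedFormula.realize_restrictFreeVar w fun x => h x x.2)

/-- The arrangement `δ_S^R` of the paper, with the relation `R` given as a set of pairs. -/
noncomputable def arrangement (S : Finset ℕ) (R : Finset (ℕ × ℕ)) : L.Formula ℕ :=
  iInf fun p : S ×ˢ S =>
    if (p : ℕ × ℕ) ∈ R then Term.equal (.var p.1.1) (.var p.1.2)
    else (Term.equal (.var p.1.1) (.var p.1.2)).not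

noncomputable def pattern (S : Finset ℕ) (v : ℕ → M) : Finset (ℕ × ℕ) := by
  classical exact (S ×ˢ S).filter fun p => v p.1 = v p.2

theorem mem_pattern {S : Finset ℕ} {v : ℕ → M} {p : ℕ × ℕ} :
    p ∈ pattern S v ↔ p ∈ S ×ˢ S ∧ v p.1 = v p.2 := by
  simp only [pattern, Finset.mem_filter]

theorem pattern_subset (S : Finset ℕ) (v : ℕ → M) : pattern S v ⊆ S ×ˢ S :=
  fun _ hp => (mem_pattern.1 hp).1

theorem isQF_arrangement (S : Finset ℕ) (R : Finset (ℕ × ℕ)) :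
    (arrangement (L := L) S R).IsQF :=
  BoundedFormula.IsQF.iInf fun p => by
    split
    · exact (BoundedFormula.IsAtomic.equal _ _).isQF
    · exact (BoundedFormula.IsAtomic.equal _ _).isQF.not

theorem subset_freeVarFinset_arrangement (S : Finset ℕ) (R : Finset (ℕ × ℕ)) :
    S ⊆ (arrangement (L := L) S R).freeVarFinset := by
  intro x hx
  refine BoundedFormula.freeVarFinset_subset_iInf _ ⟨(x, x), Finset.mk_mem_product hx hx⟩ ?_
  split <;> simp [Term.equal, Term.bdEqual, BoundedFormula.freeVarFinset, Term.varFinsetLeft]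

theorem realize_arrangement {S : Finset ℕ} {R : Finset (ℕ × ℕ)} {v : ℕ → M} :
    (arrangement (L := L) S R).Realize v ↔ ∀ p ∈ S ×ˢ S, (p ∈ R ↔ v p.1 = v p.2) := by
  simp only [arrangement, realize_iInf, Subtype.forall]
  refine forall₂_congr fun p _ => ?_
  split_ifs with hp <;> simp [hp]

theorem realize_arrangement_iff_eq_pattern {S : Finset ℕ} {R : Finset (ℕ × ℕ)} {v : ℕ → M}
    (hR : R ⊆ S ×ˢ S) : (arrangement (L := L) S R).Realize v ↔ R = pattern S v := by
  rw [realize_arrangement, Finset.ext_iff]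
  refine ⟨fun h p => ?_, fun h p hp => by rw [h, mem_pattern, and_iff_right hp]⟩
  by_cases hp : p ∈ S ×ˢ S
  · rw [h p hp, mem_pattern, and_iff_right hp]
  · exact iff_of_false (fun h' => hp (hR h')) fun h' => hp (mem_pattern.1 h').1

theorem realize_arrangement_pattern (S : Finset ℕ) (v : ℕ → M) :
    (arrangement (L := L) S (pattern S v)).Realize v :=
  (realize_arrangement_iff_eq_pattern (pattern_subset S v)).2 rfl

theorem realize_arrangement_diag {S : Finset ℕ} {v : ℕ → M} :
    (arrangement (L := L) S S.diag).Realize v ↔ Set.InjOn v S := by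
  rw [realize_arrangement]
  constructor
  · intro h x hx y hy hxy
    exact ((h (x, y) (Finset.mk_mem_product hx hy)).2 hxy |> Finset.mem_diag.1).2
  · rintro h ⟨x, y⟩ hp
    obtain ⟨hx, hy⟩ := Finset.mem_product.1 hp
    rw [Finset.mem_diag]
    exact ⟨fun ⟨_, hxy⟩ => hxy ▸ rfl, fun hxy => ⟨hx, h hx hy hxy⟩⟩

theorem pattern_eq_pattern_iff {S : Finset ℕ} {N : Type*} {v : ℕ → M} {w : ℕ → N} :
    pattern S w = pattern S v ↔ ∀ x ∈ S, ∀ y ∈ S, (w x = w y ↔ v x = v y) := by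
  simp only [Finset.ext_iff, mem_pattern, Prod.forall, Finset.mem_product]
  exact ⟨fun h x hx y hy => by simpa [hx, hy] using h x y,
    fun h x y => and_congr_right fun hxy => h x hxy.1 y hxy.2⟩

end Formula

end FirstOrder.Language

namespace FirstOrder.Language.Theory

open Formula

variable {L : Language.{u, v}} {T : L.Theory}

def IsSatisfiableOfCard (T : L.Theory) (ψ : L.Formula ℕ) (n : ℕ) : Prop :=
  ∃ (M : Type) (inst : L.Structure M), ModelsT L T M inst ∧ Cardinal.mk M = n ∧
    ∃ w : ℕ → M, RealizeIn L M inst ψ w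

/-- This is `0` when `ψ` has no finite model of `T`. -/
noncomputable def minModelCard (T : L.Theory) (ψ : L.Formula ℕ) : ℕ :=
  sInf {n | T.IsSatisfiableOfCard ψ n}

theorem _root_.StablyFiniteT.minModelCard_spec (hsf : StablyFiniteT L T) {ψ : L.Formula ℕ}
    (hψ : ψ.IsQF) {M : Type} {inst : L.Structure M} (hM : ModelsT L T M inst) {v : ℕ → M}
    (hv : RealizeIn L M inst ψ v) :
    T.IsSatisfiableOfCard ψ (T.minModelCard ψ) ∧ (T.minModelCard ψ : Cardinal) ≤ Cardinal.mk M := by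
  obtain ⟨N, instN, hN, hfin, hle, w, hw⟩ := hsf ψ hψ M inst hM v hv
  have hN' : T.IsSatisfiableOfCard ψ (Nat.card N) := ⟨N, instN, hN, Nat.cast_card.symm, w, hw⟩
  exact ⟨Nat.sInf_mem (s := {n | T.IsSatisfiableOfCard ψ n}) ⟨_, hN'⟩,
    ((Nat.cast_le.2 (Nat.sInf_le hN')).trans_eq Nat.cast_card).trans hle⟩

def freshVars (φ : L.Formula ℕ) (n : ℕ) : Finset ℕ :=
  Finset.Ico (φ.freeVarFinset.sup id + 1) (φ.freeVarFinset.sup id + 1 + n)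

theorem card_freshVars (φ : L.Formula ℕ) (n : ℕ) : (freshVars φ n).card = n := by
  simp [freshVars]

theorem notMem_freeVarFinset_of_mem_freshVars {φ : L.Formula ℕ} {n x : ℕ}
    (hx : x ∈ freshVars φ n) : x ∉ φ.freeVarFinset := fun hφ => by
  have := Finset.le_sup (f := id) hφ
  simp only [freshVars, Finset.mem_Ico] at hx
  simp only [id] at this
  omega

noncomputable def witnessCard (T : L.Theory) (φ : L.Formula ℕ) (R : Finset (ℕ × ℕ)) : ℕ :=
  T.minModelCard (φ ⊓ arrangement φ.freeVarFinset R)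

noncomputable def witness (T : L.Theory) (φ : L.Formula ℕ) : L.Formula ℕ :=
  φ ⊓ iInf fun R : (φ.freeVarFinset ×ˢ φ.freeVarFinset).powerset =>
    (arrangement φ.freeVarFinset R).imp
      (arrangement (freshVars φ (T.witnessCard φ R)) (freshVars φ (T.witnessCard φ R)).diag)

theorem isQF_witness {φ : L.Formula ℕ} (hφ : φ.IsQF) : (T.witness φ).IsQF :=
  hφ.inf (BoundedFormula.IsQF.iInf fun _ => (isQF_arrangement _ _).imp (isQF_arrangement _ _))

theorem freeVarFinset_subset_witness (φ : L.Formula ℕ) :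
    φ.freeVarFinset ⊆ (T.witness φ).freeVarFinset := by
  rw [witness, BoundedFormula.freeVarFinset_inf]
  exact Finset.subset_union_left

theorem freshVars_subset_witness (φ : L.Formula ℕ) {R : Finset (ℕ × ℕ)}
    (hR : R ⊆ φ.freeVarFinset ×ˢ φ.freeVarFinset) :
    freshVars φ (T.witnessCard φ R) ⊆ (T.witness φ).freeVarFinset := by
  intro x hx
  rw [witness, BoundedFormula.freeVarFinset_inf]
  refine Finset.mem_union_right _
    (BoundedFormula.freeVarFinset_subset_iInf _ ⟨R, Finset.mem_powerset.2 hR⟩ ?_)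
  exact Finset.mem_union_right _ (subset_freeVarFinset_arrangement _ _ hx)

theorem realize_witness {M : Type*} [L.Structure M] {φ : L.Formula ℕ} {v : ℕ → M} :
    (T.witness φ).Realize v ↔
      φ.Realize v ∧
        Set.InjOn v (freshVars φ (T.witnessCard φ (pattern φ.freeVarFinset v))) := by
  simp only [witness, realize_inf, realize_iInf, realize_imp, realize_arrangement_diag,
    Subtype.forall, Finset.mem_powerset]
  refine and_congr_right fun _ => ⟨fun h => ?_, fun h R hR hvR => ?_⟩
  · exact h _ (pattern_subset _ _) (realize_arrangement_pattern _ _)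
  · rwa [(realize_arrangement_iff_eq_pattern hR).1 hvR]

theorem realize_witness_of_eq_iff_eq {M N : Type*} [L.Structure M] [L.Structure N]
    {φ : L.Formula ℕ} {v : ℕ → M} {w : ℕ → N} (hv : (T.witness φ).Realize v)
    (hφw : φ.Realize w)
    (hker : ∀ x ∈ (T.witness φ).freeVarFinset, ∀ y ∈ (T.witness φ).freeVarFinset,
      (w x = w y ↔ v x = v y)) :
    (T.witness φ).Realize w := by
  have hS := freeVarFinset_subset_witness (T := T) φ
  rw [realize_witness] at hv ⊢
  rw [pattern_eq_pattern_iff.2 fun x hx y hy => hker x (hS hx) y (hS hy)]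
  refine ⟨hφw, fun x hx y hy hxy => hv.2 hx hy ((hker x ?_ y ?_).1 hxy)⟩
  all_goals exact freshVars_subset_witness φ (pattern_subset _ _) ‹_›

theorem realize_iff_exists_realize_witness (hsf : StablyFiniteT L T) {φ : L.Formula ℕ}
    (hφ : φ.IsQF) {M : Type} [inst : L.Structure M] (hM : ModelsT L T M inst) (v : ℕ → M) :
    RealizeIn L M inst φ v ↔
      ∃ w : ℕ → M, (∀ x, x ∉ (T.witness φ).freeVarFinset \ φ.freeVarFinset → w x = v x) ∧
        RealizeIn L M inst (T.witness φ) w := by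
  constructor
  · intro hv
    set B := freshVars φ (T.witnessCard φ (pattern φ.freeVarFinset v))
    have hB : (B.card : Cardinal) ≤ Cardinal.mk M := by
      rw [card_freshVars]
      exact (hsf.minModelCard_spec (hφ.inf (isQF_arrangement _ _)) hM
        (realize_inf.2 ⟨hv, realize_arrangement_pattern _ _⟩)).2
    obtain ⟨w, hwv, hw⟩ := exists_update_injOn_of_card_le v B hB
    have hwφ : ∀ x ∈ φ.freeVarFinset, w x = v x :=
      fun x hx => hwv x fun hxB => notMem_freeVarFinset_of_mem_freshVars hxB hx
    refine ⟨w, fun x hx => hwv x fun hxB => hx ?_, ?_⟩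
    · exact Finset.mem_sdiff.2 ⟨freshVars_subset_witness φ (pattern_subset _ _) hxB,
        notMem_freeVarFinset_of_mem_freshVars hxB⟩
    · have hpat : pattern φ.freeVarFinset w = pattern φ.freeVarFinset v :=
        pattern_eq_pattern_iff.2 fun x hx y hy => by rw [hwφ x hx, hwφ y hy]
      exact realize_witness.2 ⟨(realize_congr hwφ).2 hv, hpat ▸ hw⟩
  · rintro ⟨w, hwv, hw⟩
    have hφw := (realize_witness.1 (show (T.witness φ).Realize w from hw)).1
    exact (realize_congr fun x hx => hwv x fun h => (Finset.mem_sdiff.1 h).2 hx).1 hφw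

theorem exists_realize_witness_surjective (hsf : StablyFiniteT L T) (hfs : FinitelySmoothT L T)
    {φ : L.Formula ℕ} (hφ : φ.IsQF) {V : Finset ℕ} {E : Setoid ℕ} {M : Type}
    [inst : L.Structure M] (hM : ModelsT L T M inst) {v : ℕ → M}
    (hv : (T.witness φ).Realize v) (hE : RealizesArr E V v) :
    ∃ (A : Type) (instA : L.Structure A), ModelsT L T A instA ∧
      ∃ w : ℕ → A, RealizeIn L A instA (T.witness φ) w ∧ RealizesArr E V w ∧
        ∀ a : A, ∃ x ∈ (T.witness φ).freeVarFinset ∪ V, w x = a := by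
  classical
  set S := φ.freeVarFinset
  set W := (T.witness φ).freeVarFinset ∪ V
  set ψ := φ ⊓ arrangement S (pattern S v)
  have hψ : ψ.IsQF := hφ.inf (isQF_arrangement _ _)
  obtain ⟨hφv, hinj⟩ := realize_witness.1 hv
  obtain ⟨⟨N, instN, hN, hcardN, w₀, hw₀⟩, -⟩ :=
    hsf.minModelCard_spec hψ hM (realize_inf.2 ⟨hφv, realize_arrangement_pattern S v⟩)
  have hBW : freshVars φ (T.witnessCard φ (pattern S v)) ⊆ W :=
    (freshVars_subset_witness φ (pattern_subset _ _)).trans Finset.subset_union_left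
  have hcard : T.witnessCard φ (pattern S v) ≤ (W.image v).card := calc
    _ = ((freshVars φ _).image v).card := by rw [Finset.card_image_of_injOn hinj, card_freshVars]
    _ ≤ (W.image v).card := Finset.card_le_card (Finset.image_subset_image hBW)
  obtain ⟨A, instA, hA, hcardA, w₁, hw₁⟩ :=
    hfs ψ hψ N instN hN w₀ hw₀ _ (hcardN.trans_le (Nat.cast_le.2 hcard))
  obtain ⟨hφw₁, hpat⟩ := realize_inf.1 (show ψ.Realize w₁ from hw₁)
  rw [realize_arrangement_iff_eq_pattern (pattern_subset _ _), eq_comm,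
    pattern_eq_pattern_iff] at hpat
  have : Nonempty M := ⟨v 0⟩
  obtain ⟨w, hww₁, hker, hsurj⟩ := exists_extend_of_mk_eq_card_image v w₁
    ((freeVarFinset_subset_witness φ).trans Finset.subset_union_left) hpat hcardA
  refine ⟨A, instA, hA, w, ?_, fun x hx y hy => (hE x hx y hy).trans (hker x ?_ y ?_).symm, hsurj⟩
  · refine realize_witness_of_eq_iff_eq hv ((realize_congr hww₁).2 hφw₁) fun x hx y hy => ?_
    exact hker x (Finset.mem_union_left _ hx) y (Finset.mem_union_left _ hy)
  all_goals exact Finset.mem_union_right _ ‹_›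

end FirstOrder.Language.Theory

/-- If a theory is stably finite and finitely smooth, then it has a strong pre-witness. -/
theorem stmt_14 (L : FirstOrder.Language.{u, v}) (T : L.Theory)
    (hsf : StablyFiniteT L T) (hfs : FinitelySmoothT L T) :
    ∃ wit : L.Formula ℕ → L.Formula ℕ, IsStrongPreWitness L T wit := by
  refine ⟨T.witness, ⟨fun φ hφ => Theory.isQF_witness hφ,
    fun φ hφ M inst hM v => Theory.realize_iff_exists_realize_witness hsf hφ hM v, ?_⟩,
    fun φ hφ V E ⟨M, inst, hM, v, hv, hE⟩ =>
      Theory.exists_realize_witness_surjective hsf hfs hφ hM hv hE⟩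
  rintro φ hφ ⟨M, inst, hM, v, hv⟩
  obtain ⟨A, instA, hA, w, hw, -, hsurj⟩ :=
    Theory.exists_realize_witness_surjective hsf hfs hφ hM hv (E := ⊥) (V := ∅)
      (by simp [RealizesArr])
  refine ⟨A, instA, hA, w, (Theory.realize_witness.1 hw).1, fun a => ?_⟩
  simpa using hsurj a
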